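/- For every x ∈ (0,1): as ε → 0⁺, r̃(x + iε) + r̃(x − iε) → log(x(1−x)), where log is the real logarithm. -/

import Mathlib

open Complex Metric Filter

/-- `w(z) = z·((z−1)/z)^{1/2}` with the principal square root. -/
noncomputable def wfun (z : ℂ) : ℂ := z * ((z - 1) / z) ^ ((1 : ℂ)/2)

/-- `r̃(z) = −Log(2 + (2z−1)/w(z))` with the principal logarithm. -/
noncomputable def rTilde (z : ℂ) : ℂ := -Complex.log (2 + (2 * z - 1) / wfun z)

/-! Near a point `x ∈ (0,1)` of the cut, `(z - 1) / z` maps the upper half-plane into itself and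
tends to the negative number `(x - 1) / x`, where `Log` and the principal square root are continuous
from above. Hence `r̃` extends continuously from above with value `-Log a` at `x`, where
`a = 2 - i (2x - 1) / √(x(1 - x))` is the value of the principal branches at `x` itself. The
reflection symmetry `w(z̄) = conj (w z)` off the real axis makes the boundary value from below
`-Log ā`, and `Log a + Log ā = log |a|² = -log (x(1 - x))`. -/

open Topology ComplexConjugate

namespace Complex

lemma im_sub_one_div_self (z : ℂ) : ((z - 1) / z).im = z.im / normSq z := by
  rcases eq_or_ne z 0 with rfl | hz
  · simp
  rw [sub_div, div_self hz, sub_im, one_im, one_div, inv_im]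
  ring

lemma continuousWithinAt_cpow_const_of_re_neg_of_im_zero {z : ℂ} (hre : z.re < 0)
    (him : z.im = 0) (y : ℂ) : ContinuousWithinAt (· ^ y) {w : ℂ | 0 ≤ w.im} z := by
  have hz : z ≠ 0 := fun h ↦ by simp [h] at hre
  have hexp : ContinuousWithinAt (fun w ↦ exp (log w * y)) {w : ℂ | 0 ≤ w.im} z :=
    continuous_exp.continuousAt.comp_continuousWithinAt
      ((continuousWithinAt_log_of_re_neg_of_im_zero hre him).mul continuousWithinAt_const)
  refine hexp.congr_of_eventuallyEq ?_ (cpow_def_of_ne_zero hz y)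
  filter_upwards [nhdsWithin_le_nhds (isOpen_ne.mem_nhds hz)] with w hw
  exact cpow_def_of_ne_zero hw y

lemma ofReal_cpow_half_of_nonpos {c : ℝ} (hc : c ≤ 0) : (c : ℂ) ^ (1 / 2 : ℂ) = √(-c) * I := by
  rw [ofReal_cpow_of_nonpos hc, ← ofReal_neg, Real.sqrt_eq_rpow,
    ofReal_cpow (neg_nonneg.mpr hc)]
  push_cast
  rw [show (Real.pi : ℂ) * I * (1 / 2) = Real.pi / 2 * I by ring, exp_pi_div_two_mul_I]

lemma log_add_log_conj {u : ℂ} (hu : u.arg ≠ Real.pi) :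
    log u + log (conj u) = Real.log (normSq u) := by
  rw [log_conj u hu, add_conj, log_re, ← Complex.sq_norm, Real.log_pow]
  push_cast
  ring

end Complex

noncomputable def rTildeArg (z : ℂ) : ℂ := 2 + (2 * z - 1) / wfun z

lemma rTilde_eq_neg_log (z : ℂ) : rTilde z = -log (rTildeArg z) := rfl

lemma wfun_conj {z : ℂ} (hz : z.im ≠ 0) : wfun (conj z) = conj (wfun z) := by
  have harg : ((z - 1) / z).arg ≠ Real.pi := fun h ↦ by
    have h0 := (arg_eq_pi_iff.mp h).2
    rw [im_sub_one_div_self, div_eq_zero_iff] at h0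
    exact h0.elim hz (normSq_eq_zero.not.mpr (fun h ↦ hz (by simp [h])))
  have hquot : conj ((z - 1) / z) = (conj z - 1) / conj z := by simp
  rw [wfun, wfun, ← hquot, conj_cpow _ _ harg, map_mul]
  simp [map_ofNat]

lemma rTildeArg_conj {z : ℂ} (hz : z.im ≠ 0) : rTildeArg (conj z) = conj (rTildeArg z) := by
  simp only [rTildeArg, wfun_conj hz, map_add, map_div₀, map_sub, map_mul, map_ofNat, map_one]

lemma wfun_ofReal {x : ℝ} (hx0 : 0 < x) (hx1 : x ≤ 1) : wfun x = √(x * (1 - x)) * I := by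
  have hc : (((x : ℂ) - 1) / x) = ((x - 1) / x : ℝ) := by push_cast; rfl
  rw [wfun, hc, ofReal_cpow_half_of_nonpos (div_nonpos_of_nonpos_of_nonneg (by linarith) hx0.le),
    ← mul_assoc, ← ofReal_mul]
  congr 2
  rw [eq_comm, Real.sqrt_eq_iff_eq_sq (by nlinarith) (by positivity), mul_pow,
    Real.sq_sqrt (by rw [← neg_div, neg_sub]; exact div_nonneg (by linarith) hx0.le)]
  field_simp
  ring

lemma rTildeArg_ofReal {x : ℝ} (hx0 : 0 < x) (hx1 : x < 1) :
    rTildeArg x = 2 - ((2 * x - 1) / √(x * (1 - x)) : ℝ) * I := by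
  rw [rTildeArg, wfun_ofReal hx0 hx1.le, ← div_div, div_I]
  push_cast
  ring

lemma normSq_rTildeArg_ofReal {x : ℝ} (hx0 : 0 < x) (hx1 : x < 1) :
    normSq (rTildeArg x) = (x * (1 - x))⁻¹ := by
  have hxx : 0 < x * (1 - x) := by nlinarith
  have hx1' : 1 - x ≠ 0 := by linarith
  rw [rTildeArg_ofReal hx0 hx1, normSq_apply]
  simp only [sub_re, re_ofNat, mul_re, ofReal_re, I_re, mul_zero, ofReal_im, I_im, mul_one,
    sub_zero, sub_im, im_ofNat, mul_im, add_zero, zero_sub, mul_neg, neg_mul, neg_neg]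
  rw [div_mul_div_comm, Real.mul_self_sqrt hxx.le]
  field_simp
  ring

lemma continuousWithinAt_rTildeArg {x : ℝ} (hx0 : 0 < x) (hx1 : x < 1) :
    ContinuousWithinAt rTildeArg {z : ℂ | 0 ≤ z.im} x := by
  have hx : (x : ℂ) ≠ 0 := ofReal_ne_zero.mpr hx0.ne'
  have hmaps : Set.MapsTo (fun z : ℂ ↦ (z - 1) / z) {z | 0 ≤ z.im} {z | 0 ≤ z.im} :=
    fun z hz ↦ by
      simp only [Set.mem_ofPred_eq, im_sub_one_div_self] at hz ⊢
      exact div_nonneg hz (normSq_nonneg z)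
  have hc : (((x : ℂ) - 1) / x) = ((x - 1) / x : ℝ) := by push_cast; rfl
  have hcpow : ContinuousWithinAt (· ^ (1 / 2 : ℂ)) {z : ℂ | 0 ≤ z.im} (((x : ℂ) - 1) / x) := by
    rw [hc]
    exact continuousWithinAt_cpow_const_of_re_neg_of_im_zero
      (by simpa using div_neg_of_neg_of_pos (by linarith) hx0) (ofReal_im _) _
  have hsqrt := ContinuousWithinAt.comp (f := fun z : ℂ ↦ (z - 1) / z) hcpow
    ((continuousAt_id.sub continuousAt_const).div continuousAt_id hx).continuousWithinAt hmaps
  have hw : wfun x ≠ 0 := by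
    rw [wfun_ofReal hx0 hx1.le]
    exact mul_ne_zero (ofReal_ne_zero.mpr (Real.sqrt_pos.mpr (by nlinarith)).ne') I_ne_zero
  exact continuousWithinAt_const.add
    (((continuousWithinAt_const.mul continuousWithinAt_id).sub continuousWithinAt_const).div
      (continuousWithinAt_id.mul hsqrt) hw)

lemma tendsto_add_mul_I_nhdsWithin_im_nonneg (x : ℝ) :
    Tendsto (fun ε : ℝ ↦ (x : ℂ) + ε * I) (𝓝[>] 0) (𝓝[{z : ℂ | 0 ≤ z.im}] x) := by
  refine tendsto_nhdsWithin_iff.mpr ⟨?_, ?_⟩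
  · have : ContinuousAt (fun ε : ℝ ↦ (x : ℂ) + ε * I) 0 := by fun_prop
    simpa using this.tendsto.mono_left nhdsWithin_le_nhds
  · filter_upwards [self_mem_nhdsWithin] with ε hε
    simpa using hε.out.le

/-- For `x ∈ (0,1)`, as `ε → 0⁺`,
`r̃(x + iε) + r̃(x − iε) → log(x(1−x))` (real logarithm). -/
theorem stmt_11 (x : ℝ) (hx : x ∈ Set.Ioo (0:ℝ) 1) :
    Tendsto (fun ε : ℝ => rTilde ((x : ℂ) + ε * I) + rTilde ((x : ℂ) - ε * I))
      (nhdsWithin 0 (Set.Ioi 0)) (nhds ((Real.log (x * (1 - x)) : ℂ))) := by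
  obtain ⟨hx0, hx1⟩ := hx
  set a := rTildeArg x
  have ha_re : a.re = 2 := by simp [a, rTildeArg_ofReal hx0 hx1]
  have ha : a ∈ slitPlane := mem_slitPlane_iff.mpr (Or.inl (by linarith))
  have ha' : conj a ∈ slitPlane := mem_slitPlane_iff.mpr (Or.inl (by rw [conj_re]; linarith))
  have hlim : Tendsto (fun ε : ℝ ↦ rTildeArg (x + ε * I)) (𝓝[>] 0) (𝓝 a) :=
    (continuousWithinAt_rTildeArg hx0 hx1).tendsto.comp
      (tendsto_add_mul_I_nhdsWithin_im_nonneg x)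
  have hsum := (hlim.clog ha).neg.add
    (((continuous_conj.tendsto a).comp hlim).clog ha').neg
  have hval : -log a + -log (conj a) = (Real.log (x * (1 - x)) : ℂ) := by
    rw [← neg_add, log_add_log_conj (slitPlane_arg_ne_pi ha), normSq_rTildeArg_ofReal hx0 hx1,
      Real.log_inv, ofReal_neg, neg_neg]
  rw [← hval]
  refine hsum.congr' ?_
  filter_upwards [self_mem_nhdsWithin] with ε hε
  have him : ((x : ℂ) + ε * I).im ≠ 0 := by simpa using hε.out.ne'
  have hconj : (x : ℂ) - ε * I = conj ((x : ℂ) + ε * I) := by simp [conj_ofReal, sub_eq_add_neg]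
  simp only [Function.comp_apply, rTilde_eq_neg_log, hconj, rTildeArg_conj him]
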